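/- arXiv:1909.12052 — 8 statements merged into one kernel-verified Lean document; each statement's English description precedes it below -/
import Mathlib

section
/- For all integers n ≥ 1 and s ≥ 0, the Thue–Morse polynomial satisfies T(2^s·n; x) = T(n; x^{2^s})·T(2^s; x). -/
/-! Pairing the terms of `T(2n)` as `t(2m) x^{2m} + t(2m+1) x^{2m+1} = t(m) x^{2m} (1 - x)` gives
`T(2n; x) = T(n; x²) T(2; x)`; iterating this `s` times gives the theorem. -/

open Polynomial Finset

/-- The Thue–Morse sequence: `t n = (-1)^(binary digit sum of n)`,
so `t 0 = 1`, `t (2n) = t n`, `t (2n+1) = -t n`. -/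
def thueMorse (n : ℕ) : ℤ := (-1) ^ (Nat.digits 2 n).sum

/-- The Thue–Morse polynomial `T(n; x) = ∑_{m=0}^{n-1} t(m) x^m ∈ ℤ[x]`. -/
noncomputable def tmPoly (n : ℕ) : Polynomial ℤ :=
  ∑ m ∈ Finset.range n, Polynomial.C (thueMorse m) * Polynomial.X ^ m

lemma thueMorse_zero : thueMorse 0 = 1 := rfl

lemma thueMorse_two_mul_add (m b : ℕ) (hb : b < 2) :
    thueMorse (2 * m + b) = (-1) ^ b * thueMorse m := by
  rcases Nat.eq_zero_or_pos (2 * m + b) with h | h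
  · obtain ⟨rfl, rfl⟩ : m = 0 ∧ b = 0 := by omega
    rfl
  · rw [thueMorse, add_comm, Nat.digits_add 2 one_lt_two b m hb (by omega), List.sum_cons,
      pow_add, thueMorse]

lemma thueMorse_two_mul (m : ℕ) : thueMorse (2 * m) = thueMorse m := by
  simpa using thueMorse_two_mul_add m 0 two_pos

lemma thueMorse_two_mul_add_one (m : ℕ) : thueMorse (2 * m + 1) = -thueMorse m := by
  simpa using thueMorse_two_mul_add m 1 one_lt_two

lemma tmPoly_zero : tmPoly 0 = 0 := rfl

lemma tmPoly_succ (n : ℕ) : tmPoly (n + 1) = tmPoly n + C (thueMorse n) * X ^ n :=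
  sum_range_succ _ _

lemma tmPoly_one : tmPoly 1 = 1 := by
  simp [tmPoly_succ, tmPoly_zero, thueMorse_zero]

lemma tmPoly_two : tmPoly 2 = 1 - X := by
  have h : thueMorse 1 = -1 := thueMorse_two_mul_add_one 0
  rw [tmPoly_succ, tmPoly_one, h]
  simp [sub_eq_add_neg]

lemma tmPoly_two_mul (n : ℕ) : tmPoly (2 * n) = (tmPoly n).comp (X ^ 2) * tmPoly 2 := by
  induction n with
  | zero => simp [tmPoly_zero]
  | succ k ih =>
    rw [show 2 * (k + 1) = 2 * k + 1 + 1 by ring, tmPoly_succ, tmPoly_succ, tmPoly_succ k,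
      add_comp, ih, thueMorse_two_mul, thueMorse_two_mul_add_one, tmPoly_two]
    simp only [mul_comp, C_comp, X_pow_comp, map_neg]
    ring

theorem tmPoly_two_pow_mul_general (n s : ℕ) :
    tmPoly (2 ^ s * n) = (tmPoly n).comp (Polynomial.X ^ (2 ^ s)) * tmPoly (2 ^ s) := by
  induction s with
  | zero => simp [tmPoly_one]
  | succ s ih =>
    calc tmPoly (2 ^ (s + 1) * n)
        = (tmPoly (2 ^ s * n)).comp (X ^ 2) * tmPoly 2 := by
          rw [pow_succ', mul_assoc, tmPoly_two_mul]
      _ = (tmPoly n).comp (X ^ 2 ^ (s + 1)) * ((tmPoly (2 ^ s)).comp (X ^ 2) * tmPoly 2) := by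
          rw [ih, mul_comp, comp_assoc, X_pow_comp, ← pow_mul, ← pow_succ', mul_assoc]
      _ = (tmPoly n).comp (X ^ 2 ^ (s + 1)) * tmPoly (2 ^ (s + 1)) := by
          rw [← tmPoly_two_mul, pow_succ']

theorem tmPoly_two_pow_mul (n s : ℕ) (hn : 1 ≤ n) :
    tmPoly (2 ^ s * n) = (tmPoly n).comp (Polynomial.X ^ (2 ^ s)) * tmPoly (2 ^ s) :=
  tmPoly_two_pow_mul_general n s
end

section
/- Let p be an odd prime, α ≥ 1, r₀ = p^α, ω a primitive r₀-th root of unity, and s₀ the multiplicative order of 2 modulo r₀. If T(2^{s₀}; ω) = ∏_{i=0}^{s₀-1}(1 - ω^{2^i}) is a rational integer, then s₀ = φ(r₀). -/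
open Finset IntermediateField

/-!
Each factor `ω ^ 2 ^ i - 1` is `ζ - 1` for a primitive `p ^ α`-th root of unity `ζ`
(as `2` is prime to `p`), so its norm from `ℚ(ω)` to `ℚ` is `p`. If the product is an
integer `w` (up to sign), taking norms gives `w ^ φ(p ^ α) = p ^ s₀`, whence `p ^ φ(p ^ α)`
divides `p ^ s₀` and `φ(p ^ α) ≤ s₀`. The reverse inequality holds because `s₀` is the order
of a unit modulo `p ^ α`.
-/

theorem Int.le_of_pow_eq_prime_pow {p : ℕ} (hp : p.Prime) {z : ℤ} {m s : ℕ} (hs : s ≠ 0)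
    (h : z ^ m = (p : ℤ) ^ s) : m ≤ s := by
  have habs : z.natAbs ^ m = p ^ s := by simpa [Int.natAbs_pow] using congrArg Int.natAbs h
  have hpz : p ∣ z.natAbs := hp.dvd_of_dvd_pow (habs ▸ dvd_pow_self p hs)
  exact (Nat.pow_dvd_pow_iff_le_right hp.one_lt).mp (habs ▸ pow_dvd_pow_of_dvd hpz m)

theorem ZMod.orderOf_pos_and_le_totient {n a : ℕ} [NeZero n] (ha : a.Coprime n) :
    0 < orderOf (a : ZMod n) ∧ orderOf (a : ZMod n) ≤ n.totient := by
  rw [← ZMod.coe_unitOfCoprime a ha, orderOf_units]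
  refine ⟨orderOf_pos _, Nat.le_of_dvd (Nat.totient_pos.mpr (NeZero.pos n)) ?_⟩
  exact ZMod.card_units_eq_totient n ▸ orderOf_dvd_card

theorem IsPrimitiveRoot.isCyclotomicExtension_adjoin_rat {L : Type*} [Field L] [CharZero L]
    {n : ℕ} [NeZero n] {ζ : L} (hζ : IsPrimitiveRoot ζ n) :
    IsCyclotomicExtension {n} ℚ ℚ⟮ζ⟯ := by
  change IsCyclotomicExtension {n} ℚ ℚ⟮ζ⟯.toSubalgebra
  rw [adjoin_simple_toSubalgebra_of_isAlgebraic
    (hζ.isIntegral (NeZero.pos n)).tower_top.isAlgebraic]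
  exact hζ.adjoin_isCyclotomicExtension ℚ

section PrimePowerCyclotomic

variable {p k : ℕ} [Fact p.Prime] {ι : Type*} (t : Finset ι) {e : ι → ℕ}

theorem IsPrimitiveRoot.norm_prod_pow_sub_one {L : Type*} [Field L] [Algebra ℚ L]
    [IsCyclotomicExtension {p ^ (k + 1)} ℚ L] {ζ : L} (hζ : IsPrimitiveRoot ζ (p ^ (k + 1)))
    (hp : p ≠ 2) (he : ∀ i, (e i).Coprime p) :
    Algebra.norm ℚ (∏ i ∈ t, (ζ ^ e i - 1)) = (p : ℚ) ^ #t := by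
  rw [map_prod, ← prod_const]
  refine prod_congr rfl fun i _ => ?_
  exact (hζ.pow_of_coprime _ ((he i).pow_right (k + 1))).norm_sub_one_of_prime_ne_two
    (Polynomial.cyclotomic.irreducible_rat (NeZero.pos _)) hp

theorem IsPrimitiveRoot.pow_totient_eq_of_prod_pow_sub_one_eq {L : Type*} [Field L] [CharZero L]
    {ζ : L} (hζ : IsPrimitiveRoot ζ (p ^ (k + 1))) (hp : p ≠ 2) (he : ∀ i, (e i).Coprime p)
    {w : ℚ} (h : ∏ i ∈ t, (ζ ^ e i - 1) = w) :
    w ^ (p ^ (k + 1)).totient = (p : ℚ) ^ #t := by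
  have := hζ.isCyclotomicExtension_adjoin_rat
  have hgen : IsPrimitiveRoot (AdjoinSimple.gen ℚ ζ) (p ^ (k + 1)) :=
    IsPrimitiveRoot.coe_submonoidClass_iff.mp hζ
  have hprod : ∏ i ∈ t, (AdjoinSimple.gen ℚ ζ ^ e i - 1) = algebraMap ℚ ℚ⟮ζ⟯ w :=
    Subtype.val_injective (by simpa using h)
  rw [← hgen.norm_prod_pow_sub_one t hp he, hprod, Algebra.norm_algebraMap,
    IsCyclotomicExtension.finrank _
      (Polynomial.cyclotomic.irreducible_rat (NeZero.pos (p ^ (k + 1))))]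

end PrimePowerCyclotomic

theorem tmProd_int_imp_primitive_root (p : ℕ) (hp : p.Prime) (hpodd : Odd p) (α : ℕ)
    (hα : 1 ≤ α) (r₀ : ℕ) (hr₀ : r₀ = p ^ α) (ω : ℂ) (hω : IsPrimitiveRoot ω r₀)
    (s₀ : ℕ) (hs₀ : s₀ = orderOf (2 : ZMod r₀))
    (hint : ∃ z : ℤ, ∏ i ∈ Finset.range s₀, (1 - ω ^ (2 ^ i)) = (z : ℂ)) :
    s₀ = Nat.totient r₀ := by
  have := Fact.mk hp
  obtain ⟨k, rfl⟩ : ∃ k, α = k + 1 := ⟨α - 1, by omega⟩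
  subst hr₀
  obtain ⟨z, hz⟩ := hint
  have hp2 : p ≠ 2 := by rintro rfl; exact Nat.not_even_iff_odd.mpr hpodd even_two
  obtain ⟨hs_pos, hs_le⟩ := ZMod.orderOf_pos_and_le_totient (n := p ^ (k + 1))
    (Nat.coprime_two_left.mpr hpodd.pow)
  rw [Nat.cast_ofNat, ← hs₀] at hs_pos hs_le
  have hsub : ∏ i ∈ range s₀, (ω ^ 2 ^ i - 1) = ((((-1) ^ s₀ * z : ℤ) : ℚ) : ℂ) := calc
    _ = ∏ i ∈ range s₀, -(1 - ω ^ 2 ^ i) := by simp_rw [neg_sub]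
    _ = _ := by rw [prod_neg, card_range, hz]; push_cast; ring
  have hnorm := hω.pow_totient_eq_of_prod_pow_sub_one_eq (range s₀) hp2
    (fun i => (Nat.coprime_two_left.mpr hpodd).pow_left i) hsub
  rw [card_range] at hnorm
  exact le_antisymm hs_le (Int.le_of_pow_eq_prime_pow hp hs_pos.ne' (by exact_mod_cast hnorm))
end

section
/- Let p be an odd prime, α ≥ 1, r₀ = p^α, ω a primitive r₀-th root of unity, and s₀ the multiplicative order of 2 modulo r₀. If s₀ = φ(r₀)/2 is odd, then the set {T(2^{s₀}; ω), T(2^{s₀}; ω^{-1})} equals {i√p, -i√p}, where T(2^{s₀}; z) = ∏_{j=0}^{s₀-1}(1 - z^{2^j}). -/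
/-!
Write `A = T(2^s; ω)`, `B = T(2^s; ω⁻¹)` and `u = 2` in `(ZMod n)ˣ`. Since `s` is odd, `-1` (of
order 2) is not a power of `u`, and since `⟨u⟩` has index 2, `(ZMod n)ˣ = ⟨u⟩ ∪ -⟨u⟩`. Hence
`A * B = ∏ (1 - μ)` over all primitive `n`-th roots of unity `μ`, which is `Φₙ(1) = p` for
`n = p ^ α`. On the other hand `1 - ω^{-k} = -ω^{-k} (1 - ω^k)` and `∑ 2^j = 2^s - 1 ≡ 0 [MOD n]`,
so `B = (-1)^s A = -A`. Thus `A² = -p`.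
-/

open Finset Polynomial

theorem notMem_zpowers_of_orderOf_eq_two {G : Type*} [Group G] {t u : G}
    (ht : orderOf t = 2) (hu : Odd (orderOf u)) : t ∉ Subgroup.zpowers u := fun hmem ↦
  (Nat.not_even_iff_odd.mpr hu) (even_iff_two_dvd.mpr (ht ▸ orderOf_dvd_of_mem_zpowers hmem))

theorem Fintype.prod_eq_prod_range_orderOf_mul {G M : Type*} [Group G] [Fintype G]
    [CommMonoid M] {u t : G} (hcard : Fintype.card G = 2 * orderOf u)
    (ht : t ∉ Subgroup.zpowers u) (f : G → M) :
    ∏ g, f g = (∏ j ∈ range (orderOf u), f (u ^ j)) * ∏ j ∈ range (orderOf u), f (t * u ^ j) := by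
  set s := orderOf u
  let e : Fin 2 × Fin s → G := fun x ↦ t ^ (x.1 : ℕ) * u ^ (x.2 : ℕ)
  have he : e.Injective := by
    have hpow : ∀ i j : Fin s, u ^ (i : ℕ) = u ^ (j : ℕ) → i = j := fun i j h ↦
      Fin.ext (pow_injOn_Iio_orderOf i.2 j.2 h)
    have hcross : ∀ i j : Fin s, t * u ^ (i : ℕ) ≠ u ^ (j : ℕ) := fun i j h ↦
      ht ⟨(j : ℤ) - i, by simp only [zpow_sub, zpow_natCast, ← h]; group⟩
    rintro ⟨a, i⟩ ⟨b, j⟩ h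
    fin_cases a <;> fin_cases b <;> simp only [e, pow_zero, pow_one, one_mul] at h
    · rw [hpow i j h]
    · exact absurd h.symm (hcross j i)
    · exact absurd h (hcross i j)
    · rw [hpow i j (mul_left_cancel h)]
  have hbij : e.Bijective := (Fintype.bijective_iff_injective_and_card e).mpr
    ⟨he, by simp [hcard]⟩
  rw [← hbij.prod_comp, Fintype.prod_prod_type, Fin.prod_univ_two]
  simp only [e, Fin.val_zero, Fin.val_one, pow_zero, pow_one, one_mul]
  rw [Fin.prod_univ_eq_prod_range (fun j ↦ f (u ^ j)),
    Fin.prod_univ_eq_prod_range (fun j ↦ f (t * u ^ j))]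

theorem Finset.prod_one_sub_inv_pow {K ι : Type*} [Field K] {ω : K} (hω : ω ≠ 0)
    (s : Finset ι) (e : ι → ℕ) :
    ∏ i ∈ s, (1 - ω⁻¹ ^ e i) = (-1) ^ #s * (ω ^ ∑ i ∈ s, e i)⁻¹ * ∏ i ∈ s, (1 - ω ^ e i) := by
  have hfactor (k : ℕ) : 1 - ω⁻¹ ^ k = -(ω ^ k)⁻¹ * (1 - ω ^ k) := by
    rw [inv_pow]
    field_simp
    ring
  rw [prod_congr rfl fun i _ ↦ hfactor (e i), prod_mul_distrib, prod_neg, prod_inv_distrib,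
    prod_pow_eq_pow_sum]

theorem Complex.pair_eq_of_sq_eq_neg {z : ℂ} {x : ℝ} (hx : 0 ≤ x) (h : z ^ 2 = -x) :
    ({z, -z} : Set ℂ) = {I * √x, -(I * √x)} := by
  have hsq : z ^ 2 = (I * √x) ^ 2 := by
    rw [h, mul_pow, I_sq, ← ofReal_pow, Real.sq_sqrt hx, neg_one_mul]
  rcases sq_eq_sq_iff_eq_or_eq_neg.mp hsq with rfl | rfl
  · rfl
  · rw [neg_neg, Set.pair_comm]

namespace IsPrimitiveRoot

theorem pow_val_of_eq_natCast {M : Type*} [CommMonoid M] {ω : M} {n : ℕ}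
    (hω : IsPrimitiveRoot ω n) {x : ZMod n} {k : ℕ} (h : x = k) : ω ^ x.val = ω ^ k := by
  rw [h, ZMod.val_natCast, hω.eq_orderOf, pow_mod_orderOf]

theorem pow_val_of_eq_neg_natCast {G : Type*} [DivisionCommMonoid G] {ω : G} {n : ℕ}
    [NeZero n] (hω : IsPrimitiveRoot ω n) {x : ZMod n} {k : ℕ} (h : x = -k) :
    ω ^ x.val = ω⁻¹ ^ k := by
  rw [inv_pow]
  refine eq_inv_of_mul_eq_one_left ?_
  rw [← pow_add, hω.pow_eq_one_iff_dvd, ← ZMod.natCast_eq_zero_iff, Nat.cast_add,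
    ZMod.natCast_zmod_val, h, neg_add_cancel]

section Domain

variable {R M : Type*} [CommRing R] [IsDomain R] [CommMonoid M] {ω : R} {n : ℕ} [NeZero n]

theorem prod_primitiveRoots_eq_prod_units (hω : IsPrimitiveRoot ω n) (f : R → M) :
    ∏ μ ∈ primitiveRoots n R, f μ = ∏ g : (ZMod n)ˣ, f (ω ^ (g : ZMod n).val) := by
  have hn : 0 < n := Nat.pos_of_neZero n
  symm
  refine prod_nbij (fun g ↦ ω ^ (g : ZMod n).val) ?_ ?_ ?_ (fun _ _ ↦ rfl)
  · exact fun g _ ↦ (mem_primitiveRoots hn).mpr (hω.pow_of_coprime _ (ZMod.val_coe_unit_coprime g))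
  · exact fun g₁ _ g₂ _ h ↦
      Units.ext (ZMod.val_injective n (hω.pow_inj (ZMod.val_lt _) (ZMod.val_lt _) h))
  · intro μ hμ
    have hμ' : IsPrimitiveRoot μ n := (mem_primitiveRoots hn).mp hμ
    obtain ⟨i, hi, rfl⟩ := hω.eq_pow_of_pow_eq_one hμ'.pow_eq_one
    have hcop : i.Coprime n := (hω.pow_iff_coprime hn i).mp hμ'
    refine ⟨ZMod.unitOfCoprime i hcop, mem_coe.mpr (mem_univ _), ?_⟩
    simp only [ZMod.coe_unitOfCoprime, ZMod.val_cast_of_lt hi]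

theorem prod_units_one_sub_pow_val (hω : IsPrimitiveRoot ω n) :
    ∏ g : (ZMod n)ˣ, (1 - ω ^ (g : ZMod n).val) = (cyclotomic n R).eval 1 := by
  rw [← hω.prod_primitiveRoots_eq_prod_units, cyclotomic_eq_prod_X_sub_primitiveRoots hω, eval_prod]
  simp

end Domain

section Field

variable {K : Type*} [Field K] {ω : K} {n : ℕ}

theorem pow_geom_sum_two_eq_one (hω : IsPrimitiveRoot ω n) {s : ℕ} (hs : (2 : ZMod n) ^ s = 1) :
    ω ^ ∑ j ∈ range s, 2 ^ j = 1 := by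
  rw [hω.pow_eq_one_iff_dvd, ← ZMod.natCast_eq_zero_iff]
  have := geom_sum_mul (2 : ZMod n) s
  rw [hs, sub_self, show (2 : ZMod n) - 1 = 1 by ring, mul_one] at this
  exact_mod_cast this

theorem prod_one_sub_inv_pow_two_pow [NeZero n] (hω : IsPrimitiveRoot ω n) {s : ℕ}
    (hs : (2 : ZMod n) ^ s = 1) (hodd : Odd s) :
    ∏ j ∈ range s, (1 - ω⁻¹ ^ 2 ^ j) = -∏ j ∈ range s, (1 - ω ^ 2 ^ j) := by
  rw [prod_one_sub_inv_pow (hω.ne_zero (NeZero.ne n)), hω.pow_geom_sum_two_eq_one hs, card_range,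
    hodd.neg_one_pow, inv_one, mul_one, neg_one_mul]

theorem prod_one_sub_pow_two_pow_mul_prod_one_sub_inv_pow_two_pow (hω : IsPrimitiveRoot ω n)
    (hcard : 2 * orderOf (2 : ZMod n) = Nat.totient n) (hodd : Odd (orderOf (2 : ZMod n))) :
    (∏ j ∈ range (orderOf (2 : ZMod n)), (1 - ω ^ 2 ^ j)) *
      ∏ j ∈ range (orderOf (2 : ZMod n)), (1 - ω⁻¹ ^ 2 ^ j) = (cyclotomic n K).eval 1 := by
  have hn : 2 < n := by
    have hn2 : n ≠ 2 := by
      rintro rfl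
      simp at hcard
    have := hodd.pos
    have := Nat.totient_le n
    omega
  have : NeZero n := ⟨by omega⟩
  have : Fact (2 < n) := ⟨hn⟩
  obtain ⟨u, hu⟩ := (orderOf_pos_iff.mp hodd.pos).isUnit
  have hord : orderOf u = orderOf (2 : ZMod n) := by rw [← hu, orderOf_units]
  have hneg : orderOf (-1 : (ZMod n)ˣ) = 2 := orderOf_eq_prime (by simp)
    fun h ↦ ZMod.neg_one_ne_one (by simpa using congrArg Units.val h)
  rw [← hω.prod_units_one_sub_pow_val, Fintype.prod_eq_prod_range_orderOf_mul (t := -1)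
    (by rw [ZMod.card_units_eq_totient, hord, hcard])
    (notMem_zpowers_of_orderOf_eq_two hneg (hord ▸ hodd)), hord]
  congr 1 <;> refine prod_congr rfl fun j _ ↦ ?_ <;> push_cast [Units.val_pow_eq_pow_val, hu]
  · rw [hω.pow_val_of_eq_natCast (k := 2 ^ j) (by push_cast; rfl)]
  · rw [hω.pow_val_of_eq_neg_natCast (k := 2 ^ j) (by push_cast; simp)]

end Field

end IsPrimitiveRoot

theorem tmProd_purely_imaginary_general (p : ℕ) (hp : p.Prime) (α : ℕ)
    (hα : 1 ≤ α) (r₀ : ℕ) (hr₀ : r₀ = p ^ α) (ω : ℂ) (hω : IsPrimitiveRoot ω r₀)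
    (s₀ : ℕ) (hs₀ : s₀ = orderOf (2 : ZMod r₀))
    (hhalf : 2 * s₀ = Nat.totient r₀) (hsodd : Odd s₀) :
    ({∏ j ∈ Finset.range s₀, (1 - ω ^ (2 ^ j)),
      ∏ j ∈ Finset.range s₀, (1 - ω⁻¹ ^ (2 ^ j))} : Set ℂ) =
    {Complex.I * Real.sqrt p, -(Complex.I * Real.sqrt p)} := by
  subst hr₀ hs₀
  obtain ⟨k, rfl⟩ : ∃ k, α = k + 1 := ⟨α - 1, by omega⟩
  have : Fact p.Prime := ⟨hp⟩
  have : NeZero (p ^ (k + 1)) := ⟨pow_ne_zero _ hp.ne_zero⟩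
  have hprod := hω.prod_one_sub_pow_two_pow_mul_prod_one_sub_inv_pow_two_pow hhalf hsodd
  rw [hω.prod_one_sub_inv_pow_two_pow (pow_orderOf_eq_one _) hsodd,
    eval_one_cyclotomic_prime_pow] at hprod
  rw [hω.prod_one_sub_inv_pow_two_pow (pow_orderOf_eq_one _) hsodd]
  exact Complex.pair_eq_of_sq_eq_neg (Nat.cast_nonneg p) (by push_cast; linear_combination -hprod)

theorem tmProd_purely_imaginary (p : ℕ) (hp : p.Prime) (hpodd : Odd p) (α : ℕ)
    (hα : 1 ≤ α) (r₀ : ℕ) (hr₀ : r₀ = p ^ α) (ω : ℂ) (hω : IsPrimitiveRoot ω r₀)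
    (s₀ : ℕ) (hs₀ : s₀ = orderOf (2 : ZMod r₀))
    (hhalf : 2 * s₀ = Nat.totient r₀) (hsodd : Odd s₀) :
    ({∏ j ∈ Finset.range s₀, (1 - ω ^ (2 ^ j)),
      ∏ j ∈ Finset.range s₀, (1 - ω⁻¹ ^ (2 ^ j))} : Set ℂ) =
    {Complex.I * Real.sqrt p, -(Complex.I * Real.sqrt p)} :=
  tmProd_purely_imaginary_general p hp α hα r₀ hr₀ ω hω s₀ hs₀ hhalf hsodd
end

section
/- Let r₀ > 1 be odd with at least two distinct prime factors, ω a primitive r₀-th root of unity, and s₀ the multiplicative order of 2 modulo r₀. If T(2^{s₀}; ω) = ∏_{i=0}^{s₀-1}(1 - ω^{2^i}) is a rational integer, then T(2^{s₀}; ω) ∈ {1, -1}. -/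
/-!
The map `ζ ↦ ζ ^ 2` permutes the primitive `r₀`-th roots of unity, and `T(2^{s₀}; ω)` is the
product of `1 - ζ` over the orbit of `ω`, on which this map acts with period `s₀`. The product of
`1 - ζ` over all primitive roots is `Φ_{r₀}(1) = 1`, so the integer `T` times an algebraic integer
(the product over the remaining primitive roots) equals `1`. A rational integer that is invertible
among the algebraic integers is `±1`.
-/

open Finset Polynomial

theorem Nat.ne_prime_pow_of_two_le_card_primeFactors {n : ℕ} (hn : 2 ≤ n.primeFactors.card)
    {p : ℕ} (hp : p.Prime) (k : ℕ) : p ^ k ≠ n := by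
  rintro rfl
  rcases k.eq_zero_or_pos with rfl | hk
  · simp at hn
  · simp [Nat.primeFactors_prime_pow hk.ne' hp] at hn

theorem IsPrimitiveRoot.prod_one_sub_primitiveRoots_eq_one {K : Type*} [CommRing K] [IsDomain K]
    {n : ℕ} {ω : K} (hω : IsPrimitiveRoot ω n) (hn : 2 ≤ n.primeFactors.card) :
    ∏ ζ ∈ primitiveRoots n K, (1 - ζ) = 1 := by
  have h := eval_one_cyclotomic_not_prime_pow (R := K)
    fun hp k => Nat.ne_prime_pow_of_two_le_card_primeFactors hn hp k
  simpa [cyclotomic_eq_prod_X_sub_primitiveRoots hω, eval_prod] using h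

theorem IsPrimitiveRoot.injOn_pow_pow_range_orderOf {M : Type*} [CommMonoid M] {ω : M} {n : ℕ}
    (hω : IsPrimitiveRoot ω n) (hn : n ≠ 0) (a : ℕ) :
    Set.InjOn (fun i => ω ^ a ^ i) (range (orderOf (a : ZMod n))) := by
  intro i hi j hj hij
  have hmod : a ^ i ≡ a ^ j [MOD n] := by
    rwa [hω.eq_orderOf, ← (hω.isOfFinOrder hn).pow_eq_pow_iff_modEq]
  refine pow_injOn_Iio_orderOf (x := (a : ZMod n)) (by simpa using hi) (by simpa using hj) ?_
  simpa using (ZMod.natCast_eq_natCast_iff _ _ _).mpr hmod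

theorem IsPrimitiveRoot.image_pow_pow_subset_primitiveRoots {K : Type*} [CommRing K] [IsDomain K]
    [DecidableEq K] {n : ℕ} {ω : K} (hω : IsPrimitiveRoot ω n) (hn : 0 < n) {a : ℕ}
    (ha : a.Coprime n) (s : Finset ℕ) : s.image (fun i => ω ^ a ^ i) ⊆ primitiveRoots n K := by
  simp only [subset_iff, mem_image, mem_primitiveRoots hn]
  rintro _ ⟨i, -, rfl⟩
  exact hω.pow_of_coprime _ (ha.pow_left i)

theorem Int.isUnit_of_mul_eq_one_of_isIntegral {K : Type*} [Field K] [CharZero K] {z : ℤ} {w : K}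
    (hw : IsIntegral ℤ w) (h : (z : K) * w = 1) : IsUnit z := by
  have hz : (z : ℚ) ≠ 0 := by rintro hz; simp_all
  have hw' : algebraMap ℚ K (z : ℚ)⁻¹ = w := by
    rw [map_inv₀, map_intCast]; exact inv_eq_of_mul_eq_one_right h
  have hinv : IsIntegral ℤ ((z : ℚ)⁻¹) := by
    rwa [← isIntegral_algHom_iff (IsScalarTower.toAlgHom ℤ ℚ K) (algebraMap ℚ K).injective,
      IsScalarTower.coe_toAlgHom', hw']
  obtain ⟨y, hy⟩ := IsIntegrallyClosed.isIntegral_iff.mp hinv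
  refine IsUnit.of_mul_eq_one y (Int.cast_injective (α := ℚ) ?_)
  rw [eq_intCast] at hy
  rw [Int.cast_mul, Int.cast_one, hy]
  exact mul_inv_cancel₀ hz

theorem tmProd_int_imp_unit_general (r₀ : ℕ) (hodd : Odd r₀)
    (hfac : 2 ≤ r₀.primeFactors.card) (ω : ℂ) (hω : IsPrimitiveRoot ω r₀)
    (s₀ : ℕ) (hs₀ : s₀ = orderOf (2 : ZMod r₀))
    (hint : ∃ z : ℤ, ∏ i ∈ Finset.range s₀, (1 - ω ^ (2 ^ i)) = (z : ℂ)) :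
    ∏ i ∈ Finset.range s₀, (1 - ω ^ (2 ^ i)) = 1 ∨
      ∏ i ∈ Finset.range s₀, (1 - ω ^ (2 ^ i)) = -1 := by
  obtain ⟨z, hz⟩ := hint
  set orbit := (range s₀).image fun i => ω ^ 2 ^ i
  have horbit : orbit ⊆ primitiveRoots r₀ ℂ :=
    hω.image_pow_pow_subset_primitiveRoots hodd.pos hodd.coprime_two_left _
  have hinj : Set.InjOn (fun i => ω ^ 2 ^ i) (range s₀) := by
    simpa [hs₀] using hω.injOn_pow_pow_range_orderOf hodd.pos.ne' 2
  have hz_mul := hω.prod_one_sub_primitiveRoots_eq_one hfac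
  rw [← prod_sdiff horbit, prod_image hinj, hz, mul_comm] at hz_mul
  have hw : IsIntegral ℤ (∏ ζ ∈ primitiveRoots r₀ ℂ \ orbit, (1 - ζ)) := by
    refine IsIntegral.prod _ fun ζ hζ => isIntegral_one.sub ?_
    exact ((mem_primitiveRoots hodd.pos).mp (mem_sdiff.mp hζ).1).isIntegral hodd.pos
  rcases Int.isUnit_iff.mp (Int.isUnit_of_mul_eq_one_of_isIntegral hw hz_mul) with rfl | rfl <;>
    simp [hz]

theorem tmProd_int_imp_unit (r₀ : ℕ) (hr₀ : 1 < r₀) (hodd : Odd r₀)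
    (hfac : 2 ≤ r₀.primeFactors.card) (ω : ℂ) (hω : IsPrimitiveRoot ω r₀)
    (s₀ : ℕ) (hs₀ : s₀ = orderOf (2 : ZMod r₀))
    (hint : ∃ z : ℤ, ∏ i ∈ Finset.range s₀, (1 - ω ^ (2 ^ i)) = (z : ℂ)) :
    ∏ i ∈ Finset.range s₀, (1 - ω ^ (2 ^ i)) = 1 ∨
      ∏ i ∈ Finset.range s₀, (1 - ω ^ (2 ^ i)) = -1 :=
  tmProd_int_imp_unit_general r₀ hodd hfac ω hω s₀ hs₀ hint
end

section
/- Let r₀ > 1 be odd with at least two distinct prime factors, ω a primitive r₀-th root of unity, and s₀ the multiplicative order of 2 modulo r₀. If s₀ = φ(r₀)/2 and 2^{s₀/2} ≢ -1 (mod r₀), then T(2^{s₀}; ω) = ∏_{i=0}^{s₀-1}(1 - ω^{2^i}) ∈ {1, -1}. -/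
/-!
Let `H = ⟨2⟩ ≤ (ℤ/r)ˣ`. As `-1 ∉ H` and `H` has index two, the exponents `±2^i` (`i < s`) run
through `(ℤ/r)ˣ` exactly once, so `T(ζ) T(ζ⁻¹) = Φ_r(1) = 1`, because `r` is not a prime power.
Under every complex embedding `ζ⁻¹` becomes the complex conjugate of `ζ`, so all conjugates of the
algebraic integer `T(ζ) ∈ ℚ(ζ)` have absolute value one and, by Kronecker, `T(ζ)` is a root of
unity; for odd `r` it is a `2r`-th one. Since `2^s ≡ 1 (mod r)`, the automorphism `ζ ↦ ζ²`
permutes the factors of `T(ζ)` cyclically and fixes it. But it sends the `r`-th root of unity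
`T(ζ)² = ζ^k` to `ζ^(2k)`, so `T(ζ)² = 1`.
-/

open Finset Polynomial

/-- The product `T(2^s; ζ)` of the paper. -/
def tmProd {R : Type*} [CommRing R] (ζ : R) (s : ℕ) : R := ∏ i ∈ range s, (1 - ζ ^ 2 ^ i)

section
variable {R : Type*} [CommRing R]

theorem map_tmProd {S F : Type*} [CommRing S] [FunLike F R S] [RingHomClass F R S] (f : F)
    (ζ : R) (s : ℕ) : f (tmProd ζ s) = tmProd (f ζ) s := by
  simp [tmProd, map_prod]

theorem tmProd_sq {ζ : R} {s : ℕ} (h : ζ ^ 2 ^ s = ζ) : tmProd (ζ ^ 2) s = tmProd ζ s := by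
  cases s with
  | zero => rfl
  | succ t =>
    have hshift : ∀ i, (ζ ^ 2) ^ 2 ^ i = ζ ^ 2 ^ (i + 1) := fun i => by rw [← pow_mul, pow_succ']
    simp only [tmProd, hshift]
    rw [prod_range_succ, prod_range_succ' (fun i => 1 - ζ ^ 2 ^ i), h, pow_zero, pow_one]

theorem IsIntegral.tmProd {A : Type*} [CommRing A] [Algebra A R] {ζ : R} (h : IsIntegral A ζ)
    (s : ℕ) : IsIntegral A (tmProd ζ s) :=
  IsIntegral.prod _ fun _ _ => isIntegral_one.sub (h.pow _)

end

theorem pow_ne_of_pow_orderOf_div_two_ne {M : Type*} [Monoid M] {g c : M} (hc1 : c ≠ 1)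
    (hc2 : c ^ 2 = 1) (hg : g ^ (orderOf g / 2) ≠ c) (k : ℕ) : g ^ k ≠ c := by
  intro hk
  set t := k % orderOf g
  have ht : g ^ t = c := by rw [pow_mod_orderOf, hk]
  have ht0 : t ≠ 0 := fun h => hc1 (by rw [← ht, h, pow_zero])
  obtain ⟨m, hm⟩ : orderOf g ∣ 2 * t :=
    orderOf_dvd_of_pow_eq_one (by rw [mul_comm, pow_mul, ht, hc2])
  have hpos : 0 < orderOf g := Nat.pos_of_ne_zero fun h => ht0 (by simpa [h] using hm)
  have hlt : t < orderOf g := Nat.mod_lt k hpos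
  obtain rfl : m = 1 := by
    rcases m with _ | _ | m
    · omega
    · rfl
    · nlinarith
  exact hg (by rwa [show orderOf g / 2 = t by omega])

theorem eval_one_cyclotomic_of_two_le_card_primeFactors {R : Type*} [Ring R] {n : ℕ}
    (h : 2 ≤ n.primeFactors.card) : (cyclotomic n R).eval 1 = 1 := by
  refine eval_one_cyclotomic_not_prime_pow fun {p} hp k hpk => ?_
  rcases k.eq_zero_or_pos with rfl | hk
  · simp [← hpk] at h
  · simp [← hpk, Nat.primeFactors_prime_pow hk.ne' hp] at h

theorem IsPrimitiveRoot.pow_eq_pow_iff_natCast_eq {M : Type*} [CommMonoid M] {ζ : M} {r : ℕ}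
    [NeZero r] (hζ : IsPrimitiveRoot ζ r) (a b : ℕ) : ζ ^ a = ζ ^ b ↔ (a : ZMod r) = b := by
  rw [(isOfFinOrder_iff_pow_eq_one.2 ⟨r, NeZero.pos r, hζ.pow_eq_one⟩).pow_eq_pow_iff_modEq,
    ← hζ.eq_orderOf, ZMod.natCast_eq_natCast_iff]

theorem IsPrimitiveRoot.tmProd_mul_tmProd_inv {K : Type*} [Field K] {ζ : K} {r : ℕ}
    (hζ : IsPrimitiveRoot ζ r) (hr : Odd r) (hneg : ∀ k, (2 : ZMod r) ^ k ≠ -1)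
    (hhalf : 2 * orderOf (2 : ZMod r) = r.totient) :
    tmProd ζ (orderOf (2 : ZMod r)) * tmProd ζ⁻¹ (orderOf (2 : ZMod r)) =
      (cyclotomic r K).eval 1 := by
  classical
  have : NeZero r := ⟨hr.pos.ne'⟩
  set s := orderOf (2 : ZMod r)
  have hinj : ∀ {η : K}, IsPrimitiveRoot η r → Set.InjOn (fun i => η ^ 2 ^ i) (range s) := by
    intro η hη i hi j hj hij
    refine pow_injOn_Iio_orderOf (by simpa using hi) (by simpa using hj) ?_
    simpa using (hη.pow_eq_pow_iff_natCast_eq _ _).1 hij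
  have hprim : ∀ {η : K}, IsPrimitiveRoot η r → ∀ i, η ^ 2 ^ i ∈ primitiveRoots r K :=
    fun hη i => (mem_primitiveRoots hr.pos).2
      (hη.pow_of_coprime _ ((Nat.coprime_two_left.2 hr).pow_left i))
  set A := (range s).image (fun i => ζ ^ 2 ^ i)
  set B := (range s).image (fun i => ζ⁻¹ ^ 2 ^ i)
  have hdisj : Disjoint A B := by
    simp only [A, B, disjoint_left, mem_image, mem_range, not_exists, not_and]
    rintro _ ⟨i, -, rfl⟩ j hj hij
    have hsum : ((2 ^ i + 2 ^ j : ℕ) : ZMod r) = 0 := by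
      rw [← Nat.cast_zero, ← hζ.pow_eq_pow_iff_natCast_eq, pow_add, ← hij, inv_pow,
        inv_mul_cancel₀ (pow_ne_zero _ (hζ.ne_zero (NeZero.ne r))), pow_zero]
    -- `2^i ≡ -2^j` would put `-1 = 2^(i + s - j)` into `⟨2⟩`
    apply hneg (i + (s - j))
    have h2s : (2 : ZMod r) ^ j * 2 ^ (s - j) = 1 := by
      rw [← pow_add, Nat.add_sub_cancel' hj.le, pow_orderOf_eq_one]
    push_cast at hsum
    linear_combination 2 ^ (s - j) * hsum - h2s
  have hcover : A ∪ B = primitiveRoots r K := by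
    refine eq_of_subset_of_card_le (union_subset ?_ ?_) ?_
    · exact image_subset_iff.2 fun i _ => hprim hζ i
    · exact image_subset_iff.2 fun i _ => hprim hζ.inv i
    · rw [card_union_of_disjoint hdisj, card_image_of_injOn (hinj hζ),
        card_image_of_injOn (hinj hζ.inv), card_range, hζ.card_primitiveRoots]
      omega
  rw [cyclotomic_eq_prod_X_sub_primitiveRoots hζ, eval_prod, ← hcover, prod_union hdisj,
    prod_image (hinj hζ), prod_image (hinj hζ.inv)]
  simp [tmProd]

theorem IsPrimitiveRoot.norm_tmProd {ω : ℂ} {r : ℕ} (hω : IsPrimitiveRoot ω r) (hr : Odd r)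
    (hfac : 2 ≤ r.primeFactors.card) (hneg : ∀ k, (2 : ZMod r) ^ k ≠ -1)
    (hhalf : 2 * orderOf (2 : ZMod r) = r.totient) :
    ‖tmProd ω (orderOf (2 : ZMod r))‖ = 1 := by
  have hconj : starRingEnd ℂ ω = ω⁻¹ := (Complex.inv_eq_conj (hω.norm'_eq_one hr.pos.ne')).symm
  have h := hω.tmProd_mul_tmProd_inv hr hneg hhalf
  rw [eval_one_cyclotomic_of_two_le_card_primeFactors hfac, ← hconj, ← map_tmProd,
    Complex.mul_conj, Complex.normSq_eq_norm_sq] at h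
  exact (pow_eq_one_iff_of_nonneg (norm_nonneg _) two_ne_zero).1 (by exact_mod_cast h)

theorem IsCyclotomicExtension.Rat.pow_two_mul_eq_one {r : ℕ} {K : Type*} [Field K]
    [NumberField K] [IsCyclotomicExtension {r} ℚ K] (hr : Odd r) {x : K} (hx : IsOfFinOrder x) :
    x ^ (2 * r) = 1 := by
  have : NeZero r := ⟨hr.pos.ne'⟩
  have : NeZero (orderOf x) := ⟨hx.orderOf_pos.ne'⟩
  have hdvd := NumberField.Units.dvd_torsionOrder_of_isPrimitiveRoot (IsPrimitiveRoot.orderOf x)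
  rw [torsionOrder_eq (n := r), if_neg (Nat.not_even_iff_odd.2 hr)] at hdvd
  exact orderOf_dvd_iff_pow_eq_one.1 hdvd

theorem IsPrimitiveRoot.eq_one_or_eq_neg_one_of_map_eq_self {R F : Type*} [CommRing R]
    [IsDomain R] [FunLike F R R] [MonoidHomClass F R R] {ζ : R} {r : ℕ} [NeZero r]
    (hζ : IsPrimitiveRoot ζ r) {σ : F} (hσ : σ ζ = ζ ^ 2) {x : R} (hx : x ^ (2 * r) = 1)
    (hσx : σ x = x) : x = 1 ∨ x = -1 := by
  obtain ⟨k, -, hk⟩ := hζ.eq_pow_of_pow_eq_one (ξ := x ^ 2) (by rw [← pow_mul, hx])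
  have hfix : ζ ^ k * ζ ^ k = ζ ^ k * 1 := by
    rw [mul_one, ← mul_pow, ← sq, ← hσ, ← map_pow, hk, map_pow, hσx]
  have hk1 : ζ ^ k = 1 := mul_left_cancel₀ (pow_ne_zero _ (hζ.ne_zero (NeZero.ne r))) hfix
  exact sq_eq_one_iff.1 (hk ▸ hk1)

theorem IsCyclotomicExtension.Rat.tmProd_zeta_eq_one_or_eq_neg_one {r : ℕ} [NeZero r] {K : Type*}
    [Field K] [NumberField K] [IsCyclotomicExtension {r} ℚ K] (hr : Odd r)
    (hfac : 2 ≤ r.primeFactors.card) (hneg : ∀ k, (2 : ZMod r) ^ k ≠ -1)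
    (hhalf : 2 * orderOf (2 : ZMod r) = r.totient) :
    tmProd (zeta r ℚ K) (orderOf (2 : ZMod r)) = 1 ∨
      tmProd (zeta r ℚ K) (orderOf (2 : ZMod r)) = -1 := by
  have hζ := zeta_spec r ℚ K
  have hfin : IsOfFinOrder (tmProd (zeta r ℚ K) (orderOf (2 : ZMod r))) := by
    obtain ⟨n, hn, hpow⟩ := NumberField.Embeddings.pow_eq_one_of_norm_eq_one K ℂ
      ((hζ.isIntegral hr.pos).tmProd _) fun φ => by
        rw [map_tmProd]
        exact (hζ.map_of_injective φ.injective).norm_tmProd hr hfac hneg hhalf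
    exact isOfFinOrder_iff_pow_eq_one.2 ⟨n, hn, hpow⟩
  have hσ := fromZetaAut_spec (hζ.pow_of_coprime 2 (Nat.coprime_two_left.2 hr))
    (cyclotomic.irreducible_rat hr.pos)
  refine hζ.eq_one_or_eq_neg_one_of_map_eq_self hσ (pow_two_mul_eq_one hr hfin) ?_
  rw [map_tmProd, hσ, tmProd_sq]
  simpa using (hζ.pow_eq_pow_iff_natCast_eq (2 ^ orderOf (2 : ZMod r)) 1).2
    (by push_cast; exact pow_orderOf_eq_one _)

theorem tmProd_unit_of_half_totient (r₀ : ℕ) (hr₀ : 1 < r₀) (hodd : Odd r₀)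
    (hfac : 2 ≤ r₀.primeFactors.card) (ω : ℂ) (hω : IsPrimitiveRoot ω r₀)
    (s₀ : ℕ) (hs₀ : s₀ = orderOf (2 : ZMod r₀))
    (hhalf : 2 * s₀ = Nat.totient r₀) (hne : (2 : ZMod r₀) ^ (s₀ / 2) ≠ -1) :
    ∏ i ∈ Finset.range s₀, (1 - ω ^ (2 ^ i)) = 1 ∨
      ∏ i ∈ Finset.range s₀, (1 - ω ^ (2 ^ i)) = -1 := by
  subst hs₀
  have : Fact (2 < r₀) := ⟨by obtain ⟨k, rfl⟩ := hodd; omega⟩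
  have : NeZero r₀ := ⟨hodd.pos.ne'⟩
  have hneg : ∀ k, (2 : ZMod r₀) ^ k ≠ -1 :=
    pow_ne_of_pow_orderOf_div_two_ne ZMod.neg_one_ne_one neg_one_sq hne
  let K := CyclotomicField r₀ ℚ
  have : IsCyclotomicExtension {r₀} ℚ K := CyclotomicField.isCyclotomicExtension r₀ ℚ
  have hζ := IsCyclotomicExtension.zeta_spec r₀ ℚ K
  let e := hζ.embeddingsEquivPrimitiveRoots ℂ (cyclotomic.irreducible_rat hodd.pos)
  let φ := e.symm ⟨ω, (mem_primitiveRoots hodd.pos).2 hω⟩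
  have hφ : φ (IsCyclotomicExtension.zeta r₀ ℚ K) = ω :=
    congrArg Subtype.val (e.apply_symm_apply _)
  change tmProd ω _ = 1 ∨ tmProd ω _ = -1
  rw [← hφ, ← map_tmProd]
  exact (IsCyclotomicExtension.Rat.tmProd_zeta_eq_one_or_eq_neg_one (K := K) hodd hfac hneg
    hhalf).imp (fun h => by rw [h, map_one]) (fun h => by rw [h, map_neg, map_one])
end

section
/- Let r₀ > 1 be odd, ω a primitive r₀-th root of unity, and s₀ the multiplicative order of 2 modulo r₀. If 2^{s₀/2} ≡ -1 (mod r₀) with s₀ even, then T(2^{s₀}; ω) = |T(2^{s₀/2}; ω)|², where T(2^s; z) = ∏_{i=0}^{s-1}(1 - z^{2^i}). In particular T(2^{s₀}; ω) is a nonnegative real number. -/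
/-!
If `r₀ ∣ 2^k + 1` then `ω^(2^k) = ω⁻¹ = conj ω`, so the factors `1 - ω^(2^(k+j))` of the
second half of the product are the complex conjugates of the factors `1 - ω^(2^j)` of the
first half, and the whole product is `P · conj P = |P|²`.
-/

open Finset ComplexConjugate

lemma Complex.pow_eq_conj_of_pow_succ_eq_one {z : ℂ} {m : ℕ} (h : z ^ (m + 1) = 1) :
    z ^ m = conj z := by
  have hnorm : ‖z‖ = 1 := Complex.norm_eq_one_of_pow_eq_one h m.succ_ne_zero
  rw [← Complex.inv_eq_conj hnorm]
  exact eq_inv_of_mul_eq_one_left (by rwa [← pow_succ])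

lemma Complex.prod_range_add_self_eq_sq_norm {f : ℕ → ℂ} {n : ℕ}
    (hf : ∀ j < n, f (n + j) = conj (f j)) :
    ∏ i ∈ range (n + n), f i = ((‖∏ i ∈ range n, f i‖ ^ 2 : ℝ) : ℂ) := by
  rw [prod_range_add, prod_congr rfl fun j hj => hf j (mem_range.mp hj), ← map_prod,
    Complex.mul_conj, Complex.sq_norm]

lemma Complex.prod_one_sub_pow_two_pow_eq_sq_norm {z : ℂ} {n : ℕ} (h : z ^ (2 ^ n + 1) = 1) :
    ∏ i ∈ range (n + n), (1 - z ^ 2 ^ i) =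
      ((‖∏ i ∈ range n, (1 - z ^ 2 ^ i)‖ ^ 2 : ℝ) : ℂ) := by
  refine Complex.prod_range_add_self_eq_sq_norm fun j _ => ?_
  rw [pow_add, pow_mul, Complex.pow_eq_conj_of_pow_succ_eq_one h, ← map_pow, map_sub, map_one]

theorem tmProd_eq_sq_abs_general (r₀ : ℕ) (ω : ℂ)
    (hω : IsPrimitiveRoot ω r₀) (s₀ : ℕ)
    (heven : Even s₀) (hneg : (2 : ZMod r₀) ^ (s₀ / 2) = -1) :
    ∏ i ∈ Finset.range s₀, (1 - ω ^ (2 ^ i)) =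
      ((‖∏ i ∈ Finset.range (s₀ / 2), (1 - ω ^ (2 ^ i))‖ ^ 2 : ℝ) : ℂ) := by
  obtain ⟨k, rfl⟩ := heven
  rw [show (k + k) / 2 = k by omega] at hneg ⊢
  have hdvd : r₀ ∣ 2 ^ k + 1 := by
    rw [← ZMod.natCast_eq_zero_iff]
    push_cast [hneg]
    ring
  exact Complex.prod_one_sub_pow_two_pow_eq_sq_norm ((hω.pow_eq_one_iff_dvd _).mpr hdvd)

theorem tmProd_eq_sq_abs (r₀ : ℕ) (hr₀ : 1 < r₀) (hodd : Odd r₀) (ω : ℂ)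
    (hω : IsPrimitiveRoot ω r₀) (s₀ : ℕ) (hs₀ : s₀ = orderOf (2 : ZMod r₀))
    (heven : Even s₀) (hneg : (2 : ZMod r₀) ^ (s₀ / 2) = -1) :
    ∏ i ∈ Finset.range s₀, (1 - ω ^ (2 ^ i)) =
      ((‖∏ i ∈ Finset.range (s₀ / 2), (1 - ω ^ (2 ^ i))‖ ^ 2 : ℝ) : ℂ) :=
  tmProd_eq_sq_abs_general r₀ ω hω s₀ heven hneg
end

section
/- Let r > 1 be odd, ω an r-th root of unity, s ≥ 1 with 2^s ≡ 1 (mod r), t̃(n) = s₂(n) mod 2, T̃(n; ω) = ∑_{m=0}^{n-1} t̃(m)·ω^m, and C = ∏_{i=0}^{s-1}(1 - ω^{2^i}). Then for all n ≥ 1, T̃(2^s·n; ω) = C·T̃(n; ω) + (1 - C)·(ω^n - 1)/(2(ω - 1)) whenever ω ≠ 1. -/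
open Finset

/-- Binary digit sum of `n`. -/
def s₂ (n : ℕ) : ℕ := (Nat.digits 2 n).sum

/-- `T̃(n; z) = ∑_{m=0}^{n-1} (s₂(m) mod 2) z^m ∈ ℂ`. -/
noncomputable def tmTildeEval (n : ℕ) (z : ℂ) : ℂ :=
  ∑ m ∈ Finset.range n, ((s₂ m % 2 : ℕ) : ℂ) * z ^ m

/-!
Writing `T(n; z) = ∑_{m<n} (-1)^{s₂(m)} z^m`, we have `2 T̃(n; z) = ∑_{m<n} z^m - T(n; z)`.
Since `s₂(j + 2^s q) = s₂(j) + s₂(q)` for `j < 2^s`, the first `2^s n` terms split into `n` blocks,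
giving `T(2^s n; z) = T(2^s; z) · T(n; z^{2^s})`, and `T(2^s; z) = ∏_{i<s} (1 - z^{2^i})`. For an
`r`-th root of unity `ω` with `2^s ≡ 1 (mod r)` we have `ω^{2^s} = ω`, so `T(2^s n; ω) = C · T(n; ω)`;
substituting the geometric sums gives the recurrence.
-/

lemma s₂_add_two_pow_mul {s j : ℕ} (hj : j < 2 ^ s) (q : ℕ) :
    s₂ (j + 2 ^ s * q) = s₂ j + s₂ q := by
  rcases Nat.eq_zero_or_pos q with rfl | hq
  · simp [s₂]
  have hlen : (Nat.digits 2 j).length ≤ s := (Nat.digits_length_le_iff one_lt_two j).2 hj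
  have hdigits := Nat.digits_append_zeroes_append_digits (k := s - (Nat.digits 2 j).length)
    (n := j) one_lt_two hq
  rw [Nat.add_sub_cancel' hlen] at hdigits
  simp [s₂, ← hdigits]

noncomputable def tmEval {R : Type*} [CommRing R] (n : ℕ) (z : R) : R :=
  ∑ m ∈ range n, (-1 : R) ^ s₂ m * z ^ m

section CommRing

variable {R : Type*} [CommRing R]

lemma tmEval_two_pow_mul (s n : ℕ) (z : R) :
    tmEval (2 ^ s * n) z = tmEval (2 ^ s) z * tmEval n (z ^ 2 ^ s) := by
  induction n with
  | zero => simp [tmEval]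
  | succ n ih =>
    have block : ∀ j ∈ range (2 ^ s),
        (-1 : R) ^ s₂ (2 ^ s * n + j) * z ^ (2 ^ s * n + j)
          = (-1 : R) ^ s₂ n * (z ^ 2 ^ s) ^ n * ((-1 : R) ^ s₂ j * z ^ j) := by
      intro j hj
      rw [add_comm (2 ^ s * n), s₂_add_two_pow_mul (mem_range.1 hj), ← pow_mul]
      ring
    simp only [tmEval] at ih ⊢
    rw [Nat.mul_succ, sum_range_add, ih, sum_congr rfl block, ← mul_sum, sum_range_succ]
    ring

lemma tmEval_two (z : R) : tmEval 2 z = 1 - z := by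
  simp [tmEval, sum_range_succ, s₂, sub_eq_add_neg]

lemma tmEval_two_pow (s : ℕ) (z : R) : tmEval (2 ^ s) z = ∏ i ∈ range s, (1 - z ^ 2 ^ i) := by
  induction s with
  | zero => simp [tmEval, s₂]
  | succ s ih => rw [pow_succ, tmEval_two_pow_mul, tmEval_two, ih, prod_range_succ]

end CommRing

lemma two_mul_tmTildeEval (n : ℕ) (z : ℂ) :
    2 * tmTildeEval n z = ∑ m ∈ range n, z ^ m - tmEval n z := by
  rw [tmTildeEval, tmEval, mul_sum, ← sum_sub_distrib]
  refine sum_congr rfl fun m _ => ?_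
  rcases Nat.even_or_odd (s₂ m) with h | h
  · simp [Nat.even_iff.1 h, h.neg_one_pow]
  · simp [Nat.odd_iff.1 h, h.neg_one_pow]
    ring

lemma pow_eq_self_of_modEq_one {M : Type*} [Monoid M] {x : M} {r k : ℕ} (hx : x ^ r = 1)
    (hk : k ≡ 1 [MOD r]) : x ^ k = x := by
  rw [pow_eq_pow_mod k hx, hk, ← pow_eq_pow_mod 1 hx, pow_one]

theorem tmTildeEval_recurrence_general (r : ℕ) (ω : ℂ)
    (hω : ω ^ r = 1) (hω1 : ω ≠ 1) (s : ℕ) (hmod : 2 ^ s ≡ 1 [MOD r])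
    (C : ℂ) (hC : C = ∏ i ∈ Finset.range s, (1 - ω ^ (2 ^ i))) :
    ∀ n : ℕ, 1 ≤ n →
      tmTildeEval (2 ^ s * n) ω =
        C * tmTildeEval n ω + (1 - C) * (ω ^ n - 1) / (2 * (ω - 1)) := by
  intro n _
  have hωs : ω ^ 2 ^ s = ω := pow_eq_self_of_modEq_one hω hmod
  have hmul : tmEval (2 ^ s * n) ω = C * tmEval n ω := by
    rw [tmEval_two_pow_mul, tmEval_two_pow, hωs, hC]
  have hbig := two_mul_tmTildeEval (2 ^ s * n) ω
  have hsmall := two_mul_tmTildeEval n ω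
  rw [hmul, geom_sum_eq hω1, pow_mul, hωs] at hbig
  rw [geom_sum_eq hω1] at hsmall
  rw [div_mul_eq_div_div_swap]
  linear_combination hbig / 2 - C * hsmall / 2

theorem tmTildeEval_recurrence (r : ℕ) (hr : 1 < r) (hodd : Odd r) (ω : ℂ)
    (hω : ω ^ r = 1) (hω1 : ω ≠ 1) (s : ℕ) (hs : 1 ≤ s) (hmod : 2 ^ s ≡ 1 [MOD r])
    (C : ℂ) (hC : C = ∏ i ∈ Finset.range s, (1 - ω ^ (2 ^ i))) :
    ∀ n : ℕ, 1 ≤ n →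
      tmTildeEval (2 ^ s * n) ω =
        C * tmTildeEval n ω + (1 - C) * (ω ^ n - 1) / (2 * (ω - 1)) :=
  tmTildeEval_recurrence_general r ω hω hω1 s hmod C hC
end

section
/- Let ω = 1 and define the Rudin–Shapiro sequence r by r(0)=1, r(2n)=r(n), r(2n+1)=(-1)^n·r(n), with R(n) = ∑_{m=0}^{n-1} r(m). Then for all n ≥ 1, R(16n) - 4·R(4n) + 4·R(n) = 0. -/
/-!
Let `A n := ∑_{m<n} (-1)^m r(m)` be the alternating partial sum. Pairing the terms `2k, 2k+1`
turns the recursion for `r` into `R(2n) = R(n) + A(n)` and `A(2n) = R(n) - A(n)`, so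
`R(4n) = R(2n) + A(2n) = 2 R(n)`; hence `R(16n) = 2 R(4n) = 4 R(n)`.
-/

open Finset

theorem Finset.sum_range_two_mul {M : Type*} [AddCommMonoid M] (f : ℕ → M) (n : ℕ) :
    ∑ m ∈ range (2 * n), f m = ∑ k ∈ range n, (f (2 * k) + f (2 * k + 1)) := by
  induction n with
  | zero => simp
  | succ n ih =>
    rw [Nat.mul_succ, sum_range_succ, sum_range_succ, ih, sum_range_succ, add_assoc]

namespace RudinShapiro

variable {α : Type*} [CommRing α] {r : ℕ → α}

theorem sum_range_two_mul (heven : ∀ n : ℕ, r (2 * n) = r n)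
    (hodd : ∀ n : ℕ, r (2 * n + 1) = (-1) ^ n * r n) (n : ℕ) :
    ∑ m ∈ range (2 * n), r m = ∑ m ∈ range n, r m + ∑ m ∈ range n, (-1) ^ m * r m := by
  rw [Finset.sum_range_two_mul, ← sum_add_distrib]
  exact sum_congr rfl fun k _ ↦ by rw [heven, hodd]

theorem alternating_sum_range_two_mul (heven : ∀ n : ℕ, r (2 * n) = r n)
    (hodd : ∀ n : ℕ, r (2 * n + 1) = (-1) ^ n * r n) (n : ℕ) :
    ∑ m ∈ range (2 * n), (-1) ^ m * r m =
      ∑ m ∈ range n, r m - ∑ m ∈ range n, (-1) ^ m * r m := by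
  rw [Finset.sum_range_two_mul, ← sum_sub_distrib]
  refine sum_congr rfl fun k _ ↦ ?_
  rw [heven, hodd, pow_succ, pow_mul]
  ring

theorem sum_range_four_mul (heven : ∀ n : ℕ, r (2 * n) = r n)
    (hodd : ∀ n : ℕ, r (2 * n + 1) = (-1) ^ n * r n) (n : ℕ) :
    ∑ m ∈ range (4 * n), r m = 2 * ∑ m ∈ range n, r m := by
  rw [show 4 * n = 2 * (2 * n) by ring, sum_range_two_mul heven hodd,
    alternating_sum_range_two_mul heven hodd, sum_range_two_mul heven hodd]
  ring

end RudinShapiro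

theorem rudinShapiro_recurrence_one_general (r : ℕ → ℤ)
    (heven : ∀ n : ℕ, r (2 * n) = r n)
    (hoddr : ∀ n : ℕ, r (2 * n + 1) = (-1) ^ n * r n)
    (R : ℕ → ℤ) (hR : ∀ n : ℕ, R n = ∑ m ∈ Finset.range n, r m) :
    ∀ n : ℕ, 1 ≤ n → R (16 * n) - 4 * R (4 * n) + 4 * R n = 0 := by
  intro n _
  have hR4 (n : ℕ) : R (4 * n) = 2 * R n := by
    simp only [hR, RudinShapiro.sum_range_four_mul heven hoddr]
  rw [show 16 * n = 4 * (4 * n) by ring, hR4, hR4]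
  ring

theorem rudinShapiro_recurrence_one (r : ℕ → ℤ) (h0 : r 0 = 1)
    (heven : ∀ n : ℕ, r (2 * n) = r n)
    (hoddr : ∀ n : ℕ, r (2 * n + 1) = (-1) ^ n * r n)
    (R : ℕ → ℤ) (hR : ∀ n : ℕ, R n = ∑ m ∈ Finset.range n, r m) :
    ∀ n : ℕ, 1 ≤ n → R (16 * n) - 4 * R (4 * n) + 4 * R n = 0 :=
  rudinShapiro_recurrence_one_general r heven hoddr R hR
end
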